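/- Let a₁,…,a₅ ∈ ℂ satisfy Im(aⱼ) < 0 for j = 1,…,5 and aⱼ² ≠ aₖ² for all j ≠ k, and set A = a₁ + a₂ + a₃ + a₄ + a₅. Then (1/(π i)) ∫_ℝ y² (A² − y²) / ∏_{j=1}^{5} ((aⱼ + y)(aⱼ − y)) dy = Σ_{j=1}^{5} aⱼ (A² − aⱼ²) / ∏_{k=1, k ≠ j}^{5} (aₖ² − aⱼ²). -/

import Mathlib

/-!
Partial fractions in `u = y²`: the numerator `u (A² - u)` has degree `2 < 5` and the nodes
`aⱼ²` are distinct, so the integrand is `∑ⱼ cⱼ / (aⱼ² - y²)` with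
`cⱼ = aⱼ² (A² - aⱼ²) / ∏_{k ≠ j} (aₖ² - aⱼ²)`. For `Im a < 0` the function
`(log (a + y) - log (a - y)) / (2a)` is an antiderivative of `1 / (a² - y²)` on all of `ℝ`,
with limits `± π i / (2a)` at `± ∞`, so each term integrates to `cⱼ π i / aⱼ`.
-/

open MeasureTheory Complex Filter Topology Polynomial Finset
open scoped Real

theorem Lagrange.eval_div_prod_sub_eq_sum {F ι : Type*} [Field F] [DecidableEq ι]
    {s : Finset ι} {v : ι → F} (hvs : Set.InjOn v s) {p : F[X]} (hp : p.degree < #s)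
    {x : F} (hx : ∀ i ∈ s, x ≠ v i) :
    p.eval x / ∏ i ∈ s, (v i - x) =
      ∑ i ∈ s, p.eval (v i) / (∏ k ∈ s.erase i, (v k - v i)) * (v i - x)⁻¹ := by
  -- Mathlib's barycentric formula is written with `x - v i`; reflecting the nodes flips the signs.
  have hx' : ∀ i ∈ s, -x ≠ (-v) i := fun i hi => by simpa using hx i hi
  have key := Lagrange.eval_interpolate_not_at_node (fun i => (p.comp (-X)).eval ((-v) i)) hx'
  rw [← Lagrange.eq_interpolate (v := -v) (neg_injective.comp_injOn hvs)
    (by rwa [degree_comp_neg_X]), Lagrange.eval_nodal] at key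
  simp only [eval_comp, eval_neg, eval_X, neg_neg, Pi.neg_apply, neg_sub_neg] at key
  have hnodal : ∏ i ∈ s, (v i - x) ≠ 0 :=
    prod_ne_zero_iff.mpr fun i hi => sub_ne_zero.mpr (hx i hi).symm
  rw [key, mul_div_cancel_left₀ _ hnodal]
  refine sum_congr rfl fun i _ => ?_
  simp only [Lagrange.nodalWeight, Pi.neg_apply, neg_sub_neg, prod_inv_distrib]
  ring

namespace Complex

variable {a : ℂ}

theorem sq_sub_ofReal_sq_ne_zero (ha : a.im ≠ 0) (y : ℝ) : a ^ 2 - (y : ℂ) ^ 2 ≠ 0 := by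
  rw [sq_sub_sq]
  exact mul_ne_zero (fun h => ha (by simpa using congrArg im h))
    (fun h => ha (by simpa using congrArg im h))

theorem log_neg_of_im_pos {w : ℂ} (hw : 0 < w.im) : log (-w) = log w - π * I := by
  rw [log, log, norm_neg, arg_neg_eq_arg_sub_pi_of_im_pos hw]
  push_cast
  ring

theorem tendsto_log_add_sub_log_sub_atTop (ha : a.im < 0) :
    Tendsto (fun y : ℝ => log (a + y) - log (a - y)) atTop (𝓝 (π * I)) := by
  have hquot : Tendsto (fun y : ℝ => a / y) atTop (𝓝 0) := by
    simpa [div_eq_mul_inv] using tendsto_inv_atTop_zero.ofReal.const_mul a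
  have hlog : ContinuousAt log 1 := continuousAt_clog (by simp)
  have hlim : Tendsto (fun y : ℝ => log (1 + a / y) - log (1 - a / y) + π * I) atTop
      (𝓝 (π * I)) := by
    have hp : Tendsto (fun y : ℝ => 1 + a / y) atTop (𝓝 1) := by
      simpa using hquot.const_add 1
    have hm : Tendsto (fun y : ℝ => 1 - a / y) atTop (𝓝 1) := by
      simpa using hquot.const_sub 1
    simpa using ((hlog.tendsto.comp hp).sub (hlog.tendsto.comp hm)).add_const (π * I)
  refine hlim.congr' ?_
  filter_upwards [eventually_gt_atTop 0] with y hy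
  have hy0 : (y : ℂ) ≠ 0 := ofReal_ne_zero.mpr hy.ne'
  have hplus : a + y = y * (1 + a / y) := by field_simp; ring
  have hminus : a - y = -(y * (1 - a / y)) := by field_simp; ring
  have him_plus : (1 + a / y).im ≠ 0 := by simpa [div_ofReal_im] using div_ne_zero ha.ne hy.ne'
  have him_minus : 0 < ((y : ℂ) * (1 - a / y)).im := by
    rw [← neg_neg ((y : ℂ) * _), ← hminus]
    simpa using ha
  rw [hplus, hminus, log_neg_of_im_pos him_minus, log_ofReal_mul hy, log_ofReal_mul hy]
  · ring
  · rintro h; simp [h] at him_minus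
  · rintro h; simp [h] at him_plus

theorem tendsto_log_add_sub_log_sub_atBot (ha : a.im < 0) :
    Tendsto (fun y : ℝ => log (a + y) - log (a - y)) atBot (𝓝 (-(π * I))) := by
  refine ((tendsto_log_add_sub_log_sub_atTop ha).comp tendsto_neg_atBot_atTop).neg.congr
    fun y => ?_
  simp only [Function.comp_apply, ofReal_neg, neg_sub, sub_neg_eq_add, ← sub_eq_add_neg]

theorem hasDerivAt_log_add_sub_log_sub (ha : a.im ≠ 0) (y : ℝ) :
    HasDerivAt (fun y : ℝ => log (a + y) - log (a - y))
      (2 * a * (a ^ 2 - (y : ℂ) ^ 2)⁻¹) y := by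
  have hplus : a + y ∈ slitPlane := mem_slitPlane_iff.mpr (Or.inr (by simpa using ha))
  have hminus : a - y ∈ slitPlane := mem_slitPlane_iff.mpr (Or.inr (by simpa using ha))
  have h := (((hasDerivAt_id y).ofReal_comp.const_add a).clog_real hplus).sub
    (((hasDerivAt_id y).ofReal_comp.const_sub a).clog_real hminus)
  have h₁ := slitPlane_ne_zero hplus
  have h₂ := slitPlane_ne_zero hminus
  have h₃ := sq_sub_ofReal_sq_ne_zero ha y
  refine h.congr_deriv ?_
  simp only [id, ofReal_one]
  field_simp
  ring

theorem integrable_inv_sq_sub_ofReal_sq (ha : a.im ≠ 0) :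
    Integrable fun y : ℝ => (a ^ 2 - (y : ℂ) ^ 2)⁻¹ := by
  have hcont : Continuous fun y : ℝ => (a ^ 2 - (y : ℂ) ^ 2)⁻¹ :=
    (by fun_prop : Continuous fun y : ℝ => a ^ 2 - (y : ℂ) ^ 2).inv₀
      (sq_sub_ofReal_sq_ne_zero ha)
  refine hcont.locallyIntegrable.integrable_of_isBigO_cocompact
    (g := fun y : ℝ => (1 + y ^ 2)⁻¹) ?_ (integrable_inv_one_add_sq.integrableAtFilter _)
  refine Asymptotics.IsBigO.of_bound 2 ?_
  filter_upwards [tendsto_norm_cocompact_atTop.eventually_ge_atTop (2 * ‖a‖ ^ 2 + 1)] with y hy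
  rw [Real.norm_eq_abs] at hy
  have hy2 : 2 * ‖a‖ ^ 2 + 1 ≤ y ^ 2 := by nlinarith [sq_abs y, sq_nonneg ‖a‖]
  have hlow : (1 + y ^ 2) / 2 ≤ ‖a ^ 2 - (y : ℂ) ^ 2‖ := by
    have h := norm_sub_norm_le ((y : ℂ) ^ 2) (a ^ 2)
    rw [norm_sub_rev, norm_pow, norm_pow, norm_real, Real.norm_eq_abs, sq_abs] at h
    linarith
  rw [norm_inv, norm_inv, Real.norm_of_nonneg (by positivity)]
  calc ‖a ^ 2 - (y : ℂ) ^ 2‖⁻¹ ≤ ((1 + y ^ 2) / 2)⁻¹ := inv_anti₀ (by positivity) hlow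
    _ = 2 * (1 + y ^ 2)⁻¹ := by rw [inv_div, div_eq_mul_inv]

theorem integral_inv_sq_sub_ofReal_sq (ha : a.im < 0) :
    ∫ y : ℝ, (a ^ 2 - (y : ℂ) ^ 2)⁻¹ = π * I / a := by
  have ha0 : a ≠ 0 := by rintro rfl; simp at ha
  have hderiv (y : ℝ) : HasDerivAt (fun y : ℝ => (2 * a)⁻¹ * (log (a + y) - log (a - y)))
      (a ^ 2 - (y : ℂ) ^ 2)⁻¹ y :=
    ((hasDerivAt_log_add_sub_log_sub ha.ne y).const_mul _).congr_deriv (by field_simp)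
  rw [integral_of_hasDerivAt_of_tendsto hderiv (integrable_inv_sq_sub_ofReal_sq ha.ne)
    ((tendsto_log_add_sub_log_sub_atBot ha).const_mul _)
    ((tendsto_log_add_sub_log_sub_atTop ha).const_mul _)]
  field_simp
  ring

end Complex

theorem rational_beta_Rahman_residues_general (a : Fin 5 → ℂ)
    (him : ∀ j, (a j).im < 0)
    (hne : ∀ j k, j ≠ k → a j ^ 2 ≠ a k ^ 2)
    (A : ℂ) :
    (1 / ((Real.pi : ℂ) * Complex.I)) *
        ∫ y : ℝ, ((y : ℂ) ^ 2 * (A ^ 2 - (y : ℂ) ^ 2)) /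
          ∏ j, ((a j + (y : ℂ)) * (a j - (y : ℂ))) =
      ∑ j, a j * (A ^ 2 - a j ^ 2) /
        ∏ k ∈ Finset.univ.erase j, (a k ^ 2 - a j ^ 2) := by
  have hinj : Set.InjOn (fun j => a j ^ 2) (univ : Finset (Fin 5)) :=
    fun j _ k _ h => by_contra fun hjk => hne j k hjk h
  have hdeg : (X * (C (A ^ 2) - X) : ℂ[X]).degree < #(univ : Finset (Fin 5)) := by
    rw [card_univ, Fintype.card_fin]
    calc (X * (C (A ^ 2) - X) : ℂ[X]).degree ≤ 2 := by compute_degree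
      _ < (5 : ℕ) := by decide
  have hpartial (y : ℝ) :
      (y : ℂ) ^ 2 * (A ^ 2 - (y : ℂ) ^ 2) / ∏ j, ((a j + (y : ℂ)) * (a j - (y : ℂ))) =
        ∑ j, a j ^ 2 * (A ^ 2 - a j ^ 2) / (∏ k ∈ univ.erase j, (a k ^ 2 - a j ^ 2)) *
          (a j ^ 2 - (y : ℂ) ^ 2)⁻¹ := by
    simp_rw [← sq_sub_sq]
    simpa using Lagrange.eval_div_prod_sub_eq_sum hinj hdeg
      fun j _ => (sub_ne_zero.mp (sq_sub_ofReal_sq_ne_zero (him j).ne y)).symm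
  simp_rw [hpartial]
  rw [integral_finsetSum _ fun j _ =>
    (integrable_inv_sq_sub_ofReal_sq (him j).ne).const_mul _, mul_sum]
  refine sum_congr rfl fun j _ => ?_
  rw [integral_const_mul, integral_inv_sq_sub_ofReal_sq (him j)]
  have ha : a j ≠ 0 := by rintro h; simpa [h] using him j
  have hP : ∏ k ∈ univ.erase j, (a k ^ 2 - a j ^ 2) ≠ 0 :=
    prod_ne_zero_iff.mpr fun k hk => sub_ne_zero.mpr (hne k j (ne_of_mem_erase hk))
  field_simp

/-- Residue-sum form of the Rahman-type rational beta integral: for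
`a₁,…,a₅ ∈ ℂ` with negative imaginary parts and pairwise distinct squares,
with `A = a₁+⋯+a₅`,
`(1/(π i)) ∫_ℝ y²(A²−y²)/∏ⱼ (aⱼ+y)(aⱼ−y) dy = Σⱼ aⱼ(A²−aⱼ²)/∏_{k≠j}(aₖ²−aⱼ²)`. -/
theorem rational_beta_Rahman_residues (a : Fin 5 → ℂ)
    (him : ∀ j, (a j).im < 0)
    (hne : ∀ j k, j ≠ k → a j ^ 2 ≠ a k ^ 2)
    (A : ℂ) (hA : A = a 0 + a 1 + a 2 + a 3 + a 4) :
    (1 / ((Real.pi : ℂ) * Complex.I)) *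
        ∫ y : ℝ, ((y : ℂ) ^ 2 * (A ^ 2 - (y : ℂ) ^ 2)) /
          ∏ j, ((a j + (y : ℂ)) * (a j - (y : ℂ))) =
      ∑ j, a j * (A ^ 2 - a j ^ 2) /
        ∏ k ∈ Finset.univ.erase j, (a k ^ 2 - a j ^ 2) :=
  rational_beta_Rahman_residues_general a him hne A
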